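/- arXiv:1310.1658 — 4 statements merged into one kernel-verified Lean document; each statement's English description precedes it below -/
import Mathlib

section
/- For n ≥ 0 and real 0 < q < 1, the q-Euler polynomial satisfies E_{n,q}(x) = Σ_{l=0}^{n} C(n,l) q^{x l} E_{l,q}(0) [x]_q^{n-l}, where C(n,l) is the binomial coefficient. -/
open Finset

/-- q-analogue [z]_q = (1 - q^z)/(1 - q) (real rpow). -/
noncomputable def qn (q z : ℝ) : ℝ := (1 - q ^ z) / (1 - q)

/-- q-Euler polynomial E_{n,q}(x) = [2]_q Σ_{m} (-1)^m q^m [m+x]_q^n. -/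
noncomputable def qE (n : ℕ) (q x : ℝ) : ℝ :=
  (1 + q) * ∑' m : ℕ, (-1 : ℝ) ^ m * q ^ m * (qn q ((m : ℝ) + x)) ^ n

/-- Alternating q-power sum S*_{n,i,q}(a). -/
noncomputable def qS (n i a : ℕ) (q : ℝ) : ℝ :=
  ∑ j ∈ Finset.range a, (-1 : ℝ) ^ j * q ^ ((n + 1 - i) * j) * (qn q (j : ℝ)) ^ i

/-!
Since `[m + x]_q = q^x [m]_q + [x]_q`, the binomial theorem expands each term
`(-1)^m q^m [m + x]_q^n` of the series defining `E_{n,q}(x)` into a finite sum over `l` of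
`C(n,l) q^{xl} [x]_q^{n-l}` times `(-1)^m q^m [m]_q^l`. These series converge absolutely
(`0 ≤ [m]_q ≤ 1/(1-q)`, dominated by `q^m`), so the sum over `m` can be taken termwise,
yielding `E_{l,q}(0)` for each `l`.
-/

section QNumber

variable {q : ℝ}

theorem qn_add (hq : 0 < q) (a b : ℝ) : qn q (a + b) = q ^ b * qn q a + qn q b := by
  simp only [qn, Real.rpow_add hq]
  ring

theorem qn_nonneg (hq0 : 0 ≤ q) (hq1 : q < 1) {z : ℝ} (hz : 0 ≤ z) : 0 ≤ qn q z :=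
  div_nonneg (sub_nonneg.2 (Real.rpow_le_one hq0 hq1.le hz)) (sub_nonneg.2 hq1.le)

theorem qn_le_inv_one_sub (hq0 : 0 ≤ q) (hq1 : q < 1) (z : ℝ) : qn q z ≤ 1 / (1 - q) :=
  div_le_div_of_nonneg_right (by linarith [Real.rpow_nonneg hq0 z]) (sub_nonneg.2 hq1.le)

theorem summable_alternating_qn_pow (hq0 : 0 ≤ q) (hq1 : q < 1) {y : ℝ} (hy : 0 ≤ y) (l : ℕ) :
    Summable fun m : ℕ => (-1 : ℝ) ^ m * q ^ m * qn q ((m : ℝ) + y) ^ l := by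
  refine Summable.of_norm_bounded
    ((summable_geometric_of_lt_one hq0 hq1).mul_left ((1 / (1 - q)) ^ l)) fun m => ?_
  have h0 : 0 ≤ qn q ((m : ℝ) + y) := qn_nonneg hq0 hq1 (by positivity)
  rw [norm_mul, norm_mul, norm_pow, norm_neg, norm_one, one_pow, one_mul, norm_pow, norm_pow,
    Real.norm_of_nonneg hq0, Real.norm_of_nonneg h0, mul_comm]
  gcongr
  exact qn_le_inv_one_sub hq0 hq1 _

end QNumber

theorem qEuler_expansion_general (q : ℝ) (hq0 : 0 < q) (hq1 : q < 1) (x : ℝ) (n : ℕ) :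
    qE n q x = ∑ l ∈ Finset.range (n + 1),
      (n.choose l : ℝ) * q ^ (x * (l : ℝ)) * qE l q 0 * (qn q x) ^ (n - l) := by
  set c : ℕ → ℝ := fun l => (n.choose l : ℝ) * q ^ (x * (l : ℝ)) * qn q x ^ (n - l)
  set a : ℕ → ℕ → ℝ := fun l m => (-1 : ℝ) ^ m * q ^ m * qn q ((m : ℝ) + 0) ^ l
  have term_expansion : ∀ m : ℕ, (-1 : ℝ) ^ m * q ^ m * qn q ((m : ℝ) + x) ^ n
      = ∑ l ∈ range (n + 1), c l * a l m := fun m => by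
    rw [qn_add hq0, add_pow, mul_sum]
    refine sum_congr rfl fun l _ => ?_
    simp only [c, a, add_zero, Real.rpow_mul_natCast hq0.le]
    ring
  have summable_a : ∀ l, Summable (a l) :=
    summable_alternating_qn_pow hq0.le hq1 le_rfl
  calc qE n q x = (1 + q) * ∑ l ∈ range (n + 1), c l * ∑' m, a l m := by
        rw [qE, tsum_congr term_expansion,
          Summable.tsum_finsetSum fun l _ => (summable_a l).mul_left (c l)]
        simp only [tsum_mul_left]
    _ = _ := by
        simp only [mul_sum, qE, c, a]
        refine sum_congr rfl fun l _ => ?_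
        ring

theorem qEuler_expansion (q : ℝ) (hq0 : 0 < q) (hq1 : q < 1) (x : ℝ) (hx : 0 ≤ x) (n : ℕ) :
    qE n q x = ∑ l ∈ Finset.range (n + 1),
      (n.choose l : ℝ) * q ^ (x * (l : ℝ)) * qE l q 0 * (qn q x) ^ (n - l) :=
  qEuler_expansion_general q hq0 hq1 x n
end

section
/- Let a, b be odd positive integers, 0 < q < 1 real, and x ≥ 0, n ≥ 0. Then [2]_{q^b} [a]_q^n Σ_{j=0}^{a-1} (-1)^j q^{b j} E_{n,q^a}(b x + b j / a) = [2]_{q^a} [b]_q^n Σ_{j=0}^{b-1} (-1)^j q^{a j} E_{n,q^b}(a x + a j / b). -/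
open Finset

/-! Since `[a]_q [z]_{q^a} = [a z]_q` and `a`, `b` are odd, the left side is
`[2]_{q^a} [2]_{q^b} ∑_{j<a} ∑_m T(a m + b j)` with `T k = (-1)^k q^k [k + a b x]_q^n`.
Splitting `m` by its residue `i` modulo `b` rewrites this as the sum of `T(a b m + a i + b j)`
over `j < a`, `i < b`, `m ≥ 0`, which is symmetric in `a` and `b`. -/

section
variable {E : Type*} [NormedAddCommGroup E] [CompleteSpace E]

lemma tsum_eq_sum_range_tsum_mul_add {f : ℕ → E} (hf : Summable f) {b : ℕ} (hb : 0 < b) :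
    ∑' m, f m = ∑ i ∈ range b, ∑' m, f (b * m + i) := by
  obtain ⟨k, rfl⟩ := Nat.exists_eq_add_one_of_ne_zero hb.ne'
  simp_rw [Nat.sumByResidueClasses hf (k + 1), add_comm _ (_ * _)]
  exact Fin.sum_univ_eq_sum_range (fun i => ∑' m, f ((k + 1) * m + i)) (k + 1)

lemma sum_range_tsum_mul_add_mul_comm {f : ℕ → E} (hf : Summable f) {a b : ℕ}
    (ha : 0 < a) (hb : 0 < b) :
    ∑ j ∈ range a, ∑' m, f (a * m + b * j) =
      ∑ j ∈ range b, ∑' m, f (b * m + a * j) := by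
  have split : ∀ {a b : ℕ}, 0 < a → 0 < b → ∑ j ∈ range a, ∑' m, f (a * m + b * j) =
      ∑ j ∈ range a, ∑ i ∈ range b, ∑' m, f (a * b * m + (a * i + b * j)) := by
    intro a b ha hb
    refine sum_congr rfl fun j _ => ?_
    have hinj : Function.Injective fun m => a * m + b * j :=
      (add_left_injective _).comp (mul_right_injective₀ ha.ne')
    rw [tsum_eq_sum_range_tsum_mul_add (f := fun m => f (a * m + b * j))
      (hf.comp_injective hinj) hb]
    simp only [mul_add, mul_assoc, add_assoc]
  rw [split ha hb, split hb ha, sum_comm]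
  simp only [mul_comm a b, add_comm]

end

section
variable {q : ℝ}

lemma qn_mul_qn_pow (hq : 0 ≤ q) (a : ℕ) (z : ℝ) :
    qn q a * qn (q ^ a) z = qn q (a * z) := by
  rcases eq_or_ne q 1 with rfl | hq1
  · simp [qn]
  rcases eq_or_ne a 0 with rfl | ha
  · simp [qn]
  have hqa : q ^ (a : ℝ) ≠ 1 := by
    rwa [Real.rpow_natCast, Ne, pow_eq_one_iff_of_nonneg hq ha]
  rw [qn, qn, qn, ← Real.rpow_natCast, ← Real.rpow_mul hq]
  field_simp [sub_ne_zero.2 hq1.symm, sub_ne_zero.2 hqa.symm]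

lemma abs_qn_add_le (hq0 : 0 < q) (hq1 : q < 1) {t : ℝ} (ht : 0 ≤ t) (c : ℝ) :
    |qn q (t + c)| ≤ (1 + q ^ c) / (1 - q) := by
  have hpos := Real.rpow_pos_of_pos hq0 (t + c)
  have hle : q ^ (t + c) ≤ q ^ c :=
    Real.rpow_le_rpow_of_exponent_ge hq0 hq1.le (by linarith)
  rw [qn, abs_div, abs_of_pos (sub_pos.2 hq1)]
  gcongr
  exact (abs_sub _ _).trans (by rw [abs_one, abs_of_pos hpos]; linarith)

noncomputable def qEulerTerm (n : ℕ) (q c : ℝ) (k : ℕ) : ℝ :=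
  (-1) ^ k * q ^ k * qn q (k + c) ^ n

lemma qE_eq_tsum_qEulerTerm (n : ℕ) (x : ℝ) :
    qE n q x = (1 + q) * ∑' m, qEulerTerm n q x m := rfl

lemma summable_qEulerTerm (hq0 : 0 < q) (hq1 : q < 1) (n : ℕ) (c : ℝ) :
    Summable (qEulerTerm n q c) := by
  refine .of_norm_bounded ((summable_geometric_of_lt_one hq0.le hq1).mul_left
    (((1 + q ^ c) / (1 - q)) ^ n)) fun k => ?_
  rw [qEulerTerm, Real.norm_eq_abs, abs_mul, abs_mul, abs_pow, abs_pow, abs_pow, abs_neg, abs_one,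
    one_pow, one_mul, abs_of_pos hq0, mul_comm]
  gcongr
  exact abs_qn_add_le hq0 hq1 k.cast_nonneg c

lemma qEulerTerm_mul_add (hq : 0 ≤ q) (n : ℕ) {a : ℕ} (ha : Odd a) (c : ℝ) (d m : ℕ) :
    qEulerTerm n q c (a * m + d) =
      (-1) ^ d * q ^ d * qn q a ^ n * qEulerTerm n (q ^ a) ((d + c) / a) m := by
  have ha0 : (a : ℝ) ≠ 0 := Nat.cast_ne_zero.2 ha.pos.ne'
  have harg : ((a * m + d : ℕ) : ℝ) + c = a * (m + (d + c) / a) := by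
    push_cast; field_simp; ring
  rw [qEulerTerm, qEulerTerm, harg, ← qn_mul_qn_pow hq, pow_add, pow_add, pow_mul, pow_mul,
    ha.neg_one_pow]
  ring

lemma qE_alternating_sum_eq (hq : 0 ≤ q) (n : ℕ) {a b : ℕ} (ha : Odd a) (hb : Odd b)
    (x : ℝ) :
    (1 + q ^ b) * qn q a ^ n *
        ∑ j ∈ range a, (-1) ^ j * q ^ (b * j) * qE n (q ^ a) (b * x + b * j / a) =
      (1 + q ^ a) * (1 + q ^ b) *
        ∑ j ∈ range a, ∑' m, qEulerTerm n q (a * b * x) (a * m + b * j) := by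
  have ha0 : (a : ℝ) ≠ 0 := Nat.cast_ne_zero.2 ha.pos.ne'
  simp_rw [qEulerTerm_mul_add hq n ha, tsum_mul_left, qE_eq_tsum_qEulerTerm, mul_sum]
  refine sum_congr rfl fun j _ => ?_
  have harg : (((b * j : ℕ) : ℝ) + a * b * x) / a = b * x + b * j / a := by
    push_cast; field_simp; ring
  rw [harg, pow_mul (-1), hb.neg_one_pow]
  ring

end

theorem qEuler_symmetry_general (q : ℝ) (hq0 : 0 < q) (hq1 : q < 1) (x : ℝ)
    (n a b : ℕ) (hao : Odd a) (hbo : Odd b) :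
    (1 + q ^ b) * (qn q (a : ℝ)) ^ n *
        ∑ j ∈ Finset.range a, (-1 : ℝ) ^ j * q ^ (b * j) *
          qE n (q ^ a) ((b : ℝ) * x + (b : ℝ) * (j : ℝ) / (a : ℝ)) =
      (1 + q ^ a) * (qn q (b : ℝ)) ^ n *
        ∑ j ∈ Finset.range b, (-1 : ℝ) ^ j * q ^ (a * j) *
          qE n (q ^ b) ((a : ℝ) * x + (a : ℝ) * (j : ℝ) / (b : ℝ)) := by
  rw [qE_alternating_sum_eq hq0.le n hao hbo, qE_alternating_sum_eq hq0.le n hbo hao,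
    sum_range_tsum_mul_add_mul_comm (summable_qEulerTerm hq0 hq1 n _) hao.pos hbo.pos,
    mul_comm (b : ℝ) a]
  ring

theorem qEuler_symmetry (q : ℝ) (hq0 : 0 < q) (hq1 : q < 1) (x : ℝ) (hx : 0 ≤ x)
    (n a b : ℕ) (ha : 0 < a) (hb : 0 < b) (hao : Odd a) (hbo : Odd b) :
    (1 + q ^ b) * (qn q (a : ℝ)) ^ n *
        ∑ j ∈ Finset.range a, (-1 : ℝ) ^ j * q ^ (b * j) *
          qE n (q ^ a) ((b : ℝ) * x + (b : ℝ) * (j : ℝ) / (a : ℝ)) =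
      (1 + q ^ a) * (qn q (b : ℝ)) ^ n *
        ∑ j ∈ Finset.range b, (-1 : ℝ) ^ j * q ^ (a * j) *
          qE n (q ^ b) ((a : ℝ) * x + (a : ℝ) * (j : ℝ) / (b : ℝ)) :=
  qEuler_symmetry_general q hq0 hq1 x n a b hao hbo
end

section
/- For m, n ≥ 0, real 0 < q < 1, and x, y ≥ 0: Σ_{k=0}^{m} C(m,k) q^{(n+k) x} E_{n+k,q}(y) [x]_q^{m-k} = Σ_{k=0}^{n} C(n,k) q^{(n-k) x} E_{m+k,q}(x+y) [-x]_q^{n-k}. -/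
open Finset

/-! Since `[t + x]_q = [x]_q + q^x [t]_q` and `q^x [-x]_q = -[x]_q`, the binomial theorem collapses,
term by term in the series defining `E_{·,q}`, both sides to
`[2]_q Σ_j (-1)^j q^j (q^x [j + y]_q)^n [j + y + x]_q^m`. -/

namespace QEuler

variable {q : ℝ}

lemma qn_add (hq : 0 < q) (t x : ℝ) : qn q (t + x) = qn q x + q ^ x * qn q t := by
  rw [qn, qn, qn, add_comm t, Real.rpow_add hq]
  ring

lemma rpow_mul_qn_neg (hq : 0 < q) (x : ℝ) : q ^ x * qn q (-x) = -qn q x := by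
  rw [qn, qn, mul_div_assoc', mul_sub, ← Real.rpow_add hq, add_neg_cancel, Real.rpow_zero]
  ring

lemma abs_qn_natCast_add_le (hq0 : 0 < q) (hq1 : q < 1) (a : ℝ) (j : ℕ) :
    |qn q (j + a)| ≤ (1 + q ^ a) / (1 - q) := by
  have hpos : 0 < q ^ ((j : ℝ) + a) := Real.rpow_pos_of_pos hq0 _
  have hle : q ^ ((j : ℝ) + a) ≤ q ^ a := by
    rw [Real.rpow_add hq0, Real.rpow_natCast]
    exact mul_le_of_le_one_left (Real.rpow_nonneg hq0.le a) (pow_le_one₀ hq0.le hq1.le)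
  rw [qn, abs_div, abs_of_pos (sub_pos.mpr hq1)]
  gcongr
  exact abs_sub_le_iff.mpr ⟨by linarith, by linarith⟩

lemma summable_qE_series (hq0 : 0 < q) (hq1 : q < 1) (N : ℕ) (a : ℝ) :
    Summable fun j : ℕ => (-1 : ℝ) ^ j * q ^ j * qn q (j + a) ^ N := by
  refine Summable.of_norm_bounded
    ((summable_geometric_of_lt_one hq0.le hq1).mul_left (((1 + q ^ a) / (1 - q)) ^ N)) fun j => ?_
  rw [Real.norm_eq_abs, abs_mul, abs_mul, abs_pow, abs_pow, abs_neg, abs_one, one_pow, one_mul,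
    abs_of_pos hq0, mul_comm]
  gcongr
  rw [abs_pow]
  gcongr
  exact abs_qn_natCast_add_le hq0 hq1 a j

lemma sum_mul_qE {ι : Type*} (hq0 : 0 < q) (hq1 : q < 1) (s : Finset ι) (c : ι → ℝ) (d : ι → ℕ)
    (a : ℝ) :
    ∑ k ∈ s, c k * qE (d k) q a =
      (1 + q) * ∑' j : ℕ, (-1 : ℝ) ^ j * q ^ j * ∑ k ∈ s, c k * qn q (j + a) ^ d k := by
  simp_rw [Finset.mul_sum]
  rw [Summable.tsum_finsetSum fun k _ =>
    ((summable_qE_series hq0 hq1 (d k) a).mul_right (c k)).congr fun j => by ring, Finset.mul_sum]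
  refine Finset.sum_congr rfl fun k _ => ?_
  rw [qE, ← tsum_mul_left, ← tsum_mul_left, ← tsum_mul_left]
  exact tsum_congr fun j => by ring

lemma sum_choose_mul_qn_add (hq : 0 < q) (x t : ℝ) (m n : ℕ) :
    ∑ k ∈ range (m + 1), (m.choose k : ℝ) * q ^ (x * ((n + k : ℕ) : ℝ)) * qn q x ^ (m - k) *
        qn q t ^ (n + k) =
      (q ^ x * qn q t) ^ n * qn q (t + x) ^ m := by
  rw [qn_add hq, add_comm (qn q x), add_pow, Finset.mul_sum]
  refine Finset.sum_congr rfl fun k _ => ?_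
  rw [Real.rpow_mul hq.le, Real.rpow_natCast]
  ring

lemma sum_choose_mul_qn_neg (hq : 0 < q) (x t : ℝ) (m n : ℕ) :
    ∑ k ∈ range (n + 1), (n.choose k : ℝ) * q ^ (x * ((n - k : ℕ) : ℝ)) * qn q (-x) ^ (n - k) *
        qn q (t + x) ^ (m + k) =
      (q ^ x * qn q t) ^ n * qn q (t + x) ^ m := by
  have hsub : q ^ x * qn q t = qn q (t + x) + q ^ x * qn q (-x) := by
    rw [rpow_mul_qn_neg hq, qn_add hq]
    ring
  rw [hsub, add_pow, Finset.sum_mul]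
  refine Finset.sum_congr rfl fun k _ => ?_
  rw [Real.rpow_mul hq.le, Real.rpow_natCast]
  ring

end QEuler

theorem qEuler_double_identity_general (q : ℝ) (hq0 : 0 < q) (hq1 : q < 1) (x y : ℝ) (m n : ℕ) :
    ∑ k ∈ Finset.range (m + 1), (m.choose k : ℝ) * q ^ (x * ((n + k : ℕ) : ℝ)) *
        qE (n + k) q y * (qn q x) ^ (m - k) =
      ∑ k ∈ Finset.range (n + 1), (n.choose k : ℝ) * q ^ (x * ((n - k : ℕ) : ℝ)) *
        qE (m + k) q (x + y) * (qn q (-x)) ^ (n - k) := by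
  simp_rw [mul_right_comm _ (qE _ _ _)]
  rw [QEuler.sum_mul_qE hq0 hq1 _ (fun k => _ * _ * qn q x ^ (m - k)) (n + ·),
    QEuler.sum_mul_qE hq0 hq1 _ (fun k => _ * _ * qn q (-x) ^ (n - k)) (m + ·)]
  congr 2
  ext j
  rw [QEuler.sum_choose_mul_qn_add hq0, ← add_assoc, add_right_comm (j : ℝ) x y,
    QEuler.sum_choose_mul_qn_neg hq0]

theorem qEuler_double_identity (q : ℝ) (hq0 : 0 < q) (hq1 : q < 1) (x y : ℝ) (hx : 0 ≤ x)
    (hy : 0 ≤ y) (m n : ℕ) :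
    ∑ k ∈ Finset.range (m + 1), (m.choose k : ℝ) * q ^ (x * ((n + k : ℕ) : ℝ)) *
        qE (n + k) q y * (qn q x) ^ (m - k) =
      ∑ k ∈ Finset.range (n + 1), (n.choose k : ℝ) * q ^ (x * ((n - k : ℕ) : ℝ)) *
        qE (m + k) q (x + y) * (qn q (-x)) ^ (n - k) :=
  qEuler_double_identity_general q hq0 hq1 x y m n
end

section
/- Let a be an odd positive integer, 0 < q < 1 real, x ≥ 0, n ≥ 0. Then E_{n,q}(a x) = ([2]_q / [2]_{q^a}) [a]_q^n Σ_{j=0}^{a-1} (-1)^j q^j E_{n,q^a}(x + j/a). -/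
open Finset

lemma qn_bounds {q : ℝ} (hq0 : 0 < q) (hq1 : q < 1) {z : ℝ} (hz : 0 ≤ z) :
    0 ≤ qn q z ∧ qn q z ≤ 1 / (1 - q) := by
  have h1 : q ^ z ≤ 1 := Real.rpow_le_one hq0.le hq1.le hz
  have h2 : (0:ℝ) < q ^ z := Real.rpow_pos_of_pos hq0 z
  have h3 : (0:ℝ) < 1 - q := by linarith
  constructor
  · exact div_nonneg (by linarith) h3.le
  · exact div_le_div_of_nonneg_right (by linarith) h3.le

lemma summable_qE (q : ℝ) (hq0 : 0 < q) (hq1 : q < 1) (c : ℝ) (hc : 0 ≤ c) (n : ℕ) :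
    Summable (fun m : ℕ => (-1 : ℝ) ^ m * q ^ m * (qn q ((m : ℝ) + c)) ^ n) := by
  have hb : Summable (fun m : ℕ => (1 / (1 - q)) ^ n * q ^ m) :=
    (summable_geometric_of_lt_one hq0.le hq1).mul_left _
  have hle : ∀ m : ℕ, |(-1 : ℝ) ^ m * q ^ m * (qn q ((m : ℝ) + c)) ^ n|
      ≤ (1 / (1 - q)) ^ n * q ^ m := by
    intro m
    have hz : (0:ℝ) ≤ (m:ℝ) + c := by positivity
    obtain ⟨h1, h2⟩ := qn_bounds hq0 hq1 hz
    rw [abs_mul, abs_mul, abs_pow, abs_pow, abs_pow, abs_neg, abs_one, one_pow, one_mul,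
      abs_of_pos hq0, abs_of_nonneg h1, mul_comm]
    gcongr
  exact Summable.of_abs (Summable.of_nonneg_of_le (fun m => abs_nonneg _) hle hb)

lemma qn_mul (q : ℝ) (hq0 : 0 < q) (hq1 : q < 1) (a : ℕ) (ha : 0 < a) (y : ℝ) :
    qn q (a : ℝ) * qn (q ^ a) y = qn q ((a : ℝ) * y) := by
  have hqa1 : q ^ a < 1 := pow_lt_one₀ hq0.le hq1 ha.ne'
  have h1 : (q:ℝ) ^ ((a:ℝ)) = q ^ a := Real.rpow_natCast q a
  have h2 : (q ^ a : ℝ) ^ y = q ^ ((a:ℝ) * y) := by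
    rw [Real.rpow_mul hq0.le, Real.rpow_natCast]
  unfold qn
  rw [h1, h2]
  have hne : (1 : ℝ) - q ^ a ≠ 0 := by nlinarith
  have hne2 : (1:ℝ) - q ≠ 0 := by linarith
  field_simp

theorem qEuler_multiplication (q : ℝ) (hq0 : 0 < q) (hq1 : q < 1) (x : ℝ) (hx : 0 ≤ x)
    (n a : ℕ) (ha : 0 < a) (hao : Odd a) :
    qE n q ((a : ℝ) * x) = ((1 + q) / (1 + q ^ a)) * (qn q (a : ℝ)) ^ n *
      ∑ j ∈ Finset.range a, (-1 : ℝ) ^ j * q ^ j *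
        qE n (q ^ a) (x + (j : ℝ) / (a : ℝ)) := by
  haveI : NeZero a := ⟨ha.ne'⟩
  have hqa0 : 0 < q ^ a := pow_pos hq0 a
  have hqa1 : q ^ a < 1 := pow_lt_one₀ hq0.le hq1 ha.ne'
  have hA : (0:ℝ) < (a:ℝ) := Nat.cast_pos.mpr ha
  set F : ℕ → ℝ := fun m => (-1 : ℝ) ^ m * q ^ m * (qn q ((m : ℝ) + (a:ℝ) * x)) ^ n with hF
  have hFsum : Summable F := summable_qE q hq0 hq1 _ (by positivity) n
  -- key termwise identity
  have key : ∀ j k : ℕ,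
      (qn q (a:ℝ))^n * ((-1:ℝ)^j * q^j *
        ((-1:ℝ)^k * (q^a)^k * (qn (q^a) ((k:ℝ) + (x + (j:ℝ)/(a:ℝ))))^n))
      = F (a * k + j) := by
    intro j k
    have hq' : qn q (a:ℝ) * qn (q^a) ((k:ℝ) + (x + (j:ℝ)/(a:ℝ)))
        = qn q (((a*k+j : ℕ) : ℝ) + (a:ℝ)*x) := by
      rw [qn_mul q hq0 hq1 a ha]
      congr 1
      push_cast
      field_simp
      ring
    have hsign : ((-1:ℝ))^(a*k+j) = (-1:ℝ)^k * (-1:ℝ)^j := by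
      rw [pow_add, pow_mul, hao.neg_one_pow]
    have hpow : (q:ℝ)^(a*k+j) = (q^a)^k * q^j := by rw [pow_add, pow_mul]
    simp only [hF]
    rw [hsign, hpow, ← hq', mul_pow]
    ring
  -- per-j: pull constants into the tsum
  have step1 : ∀ j : ℕ, (qn q (a:ℝ))^n * ((-1:ℝ)^j * q^j *
      ∑' k : ℕ, (-1:ℝ)^k * (q^a)^k * (qn (q^a) ((k:ℝ) + (x + (j:ℝ)/(a:ℝ))))^n)
      = ∑' k : ℕ, F (a * k + j) := by
    intro j
    rw [← tsum_mul_left, ← tsum_mul_left]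
    exact tsum_congr fun k => key j k
  -- regrouping
  have hGsum : Summable (fun p : ℕ × Fin a => F (p.1 * a + (p.2 : ℕ))) := by
    have := (Nat.divModEquiv a).symm.summable_iff.mpr hFsum
    simpa [Function.comp_def, Nat.divModEquiv] using this
  have regroup : ∑ j ∈ Finset.range a, ∑' k : ℕ, F (a * k + j) = ∑' m : ℕ, F m := by
    have e1 : ∑' m : ℕ, F m = ∑' p : ℕ × Fin a, F (p.1 * a + (p.2 : ℕ)) := by
      rw [← (Nat.divModEquiv a).symm.tsum_eq F]
      rfl
    have e2 : ∑' p : ℕ × Fin a, F (p.1 * a + (p.2 : ℕ))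
        = ∑' (k : ℕ) (j : Fin a), F (k * a + (j : ℕ)) := Summable.tsum_prod hGsum
    have e3 : ∑' (k : ℕ) (j : Fin a), F (k * a + (j : ℕ))
        = ∑' (j : Fin a) (k : ℕ), F (k * a + (j : ℕ)) :=
      (Summable.tsum_comm (by exact hGsum)).symm
    have e4 : ∑' (j : Fin a) (k : ℕ), F (k * a + (j : ℕ))
        = ∑ j ∈ Finset.range a, ∑' k : ℕ, F (a * k + j) := by
      rw [tsum_fintype]
      rw [← Fin.sum_univ_eq_sum_range (fun j => ∑' k : ℕ, F (a * k + j)) a]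
      exact Finset.sum_congr rfl fun j _ => tsum_congr fun k => by rw [mul_comm]
    rw [e1, e2, e3, e4]
  -- assemble
  have hne : (1:ℝ) + q ^ a ≠ 0 := by positivity
  rw [qE]
  calc (1 + q) * ∑' m : ℕ, (-1:ℝ)^m * q^m * (qn q ((m:ℝ) + (a:ℝ)*x))^n
      = (1 + q) * ∑ j ∈ Finset.range a, ∑' k : ℕ, F (a * k + j) := by
        rw [regroup]
    _ = (1 + q) * ∑ j ∈ Finset.range a, (qn q (a:ℝ))^n * ((-1:ℝ)^j * q^j *
          ∑' k : ℕ, (-1:ℝ)^k * (q^a)^k * (qn (q^a) ((k:ℝ) + (x + (j:ℝ)/(a:ℝ))))^n) := by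
        rw [Finset.sum_congr rfl fun j _ => (step1 j).symm]
    _ = ((1 + q) / (1 + q ^ a)) * (qn q (a : ℝ)) ^ n *
          ∑ j ∈ Finset.range a, (-1 : ℝ) ^ j * q ^ j *
            qE n (q ^ a) (x + (j : ℝ) / (a : ℝ)) := by
        simp only [qE]
        rw [Finset.mul_sum, Finset.mul_sum]
        refine Finset.sum_congr rfl fun j _ => ?_
        rw [div_mul_eq_mul_div, div_mul_eq_mul_div, eq_div_iff hne]
        ring
end
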